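/- Let Zρ_Z be a cq-state with ρ = ρ_Z, ρ_b = Σ_{z: f(z)=b} p(z)ρ_z for b ∈ {0,1}, and let M be the measurement that applies the Pretty Good Measurement and outputs f of the result. Then Pr[M(ρ_Z) = f(Z)] − Pr[M(ρ_Z) ≠ f(Z)] = Tr(ρ^{-1/2}(ρ_0 − ρ_1)ρ^{-1/2}(ρ_0 − ρ_1)), and in particular this quantity is nonnegative. -/

import Mathlib

open scoped Kronecker ComplexOrder
open Matrix BigOperators

/-- The square root of a positive semidefinite matrix (Mathlib's removed `Matrix.PosSemidef.sqrt`). -/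
noncomputable def Matrix.PosSemidef.sqrt {n : Type*} [Fintype n] [DecidableEq n] {A : Matrix n n ℂ}
    (hA : A.PosSemidef) : Matrix n n ℂ :=
  hA.1.eigenvectorUnitary.1 * diagonal ((↑) ∘ (√·) ∘ hA.1.eigenvalues) *
    (star hA.1.eigenvectorUnitary : Matrix n n ℂ)

/-- Schatten-1 norm `‖A‖₁ = Tr √(AᴴA)`. -/
noncomputable def trNorm {n m : Type*} [Fintype n] [Fintype m] [DecidableEq m] (A : Matrix n m ℂ) : ℝ :=
  ((Matrix.posSemidef_conjTranspose_mul_self A).sqrt.trace).re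

/-- Trace distance `(1/2)‖A − B‖₁`. -/
noncomputable def trDist {n : Type*} [Fintype n] [DecidableEq n] (A B : Matrix n n ℂ) : ℝ :=
  (1/2) * trNorm (A - B)

/-- `ρ` is a density matrix. -/
def IsDensity {n : Type*} [Fintype n] (ρ : Matrix n n ℂ) : Prop :=
  ρ.PosSemidef ∧ ρ.trace = 1

/-- The Pretty Good Measurement element `E_{z'} = p(z') ρ^{-1/2} ρ_{z'} ρ^{-1/2}`. -/
noncomputable def pgm {Z : Type*} [Fintype Z] {D : ℕ} (p : Z → ℝ)
    (ρ : Z → Matrix (Fin D) (Fin D) ℂ) (h : (∑ z, (p z : ℂ) • ρ z).PosDef) (z' : Z) :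
    Matrix (Fin D) (Fin D) ℂ :=
  (p z' : ℂ) • ((h.posSemidef.sqrt)⁻¹ * ρ z' * (h.posSemidef.sqrt)⁻¹)

/-! Write `S = ρ^{-1/2}` and `ε(z) = (-1)^{f(z)}`. Since `ε(z)ε(z')` is `1` when `f z = f z'` and
`-1` otherwise, the success minus failure probability is
`∑_{z,z'} ε(z)ε(z') Tr(S (p(z')ρ_{z'}) S (p(z)ρ_z))`, which by bilinearity is `Tr(S A S A)` for
`A = ∑_z ε(z) p(z) ρ_z = ρ₀ - ρ₁`. For nonnegativity, write `S = T²` with `T ≥ 0`: then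
`Tr(S A S A) = Tr(C* C) ≥ 0` for the Hermitian `C = T A T`. -/

open Finset

namespace Matrix

variable {n : Type*} [Fintype n]

lemma PosSemidef.posSemidef_sqrt [DecidableEq n] {A : Matrix n n ℂ} (hA : A.PosSemidef) :
    hA.sqrt.PosSemidef := by
  have hD : (diagonal ((↑) ∘ (√·) ∘ hA.1.eigenvalues) : Matrix n n ℂ).PosSemidef :=
    posSemidef_diagonal_iff.2 fun i => by simp [Real.sqrt_nonneg]
  simpa [PosSemidef.sqrt, star_eq_conjTranspose] using
    hD.mul_mul_conjTranspose_same hA.1.eigenvectorUnitary.1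

open scoped MatrixOrder in
lemma PosSemidef.trace_mul_mul_mul_nonneg {𝕜 : Type*} [RCLike 𝕜] {S A : Matrix n n 𝕜}
    (hS : S.PosSemidef) (hA : A.IsHermitian) : 0 ≤ (S * A * S * A).trace := by
  classical
  set T := CFC.sqrt S
  have hT : T.IsHermitian := (CFC.sqrt_nonneg S).posSemidef.isHermitian
  have hTT : T * T = S := CFC.sqrt_mul_sqrt_self S hS.nonneg
  have hC : (T * A * T)ᴴ = T * A * T := by
    simp only [conjTranspose_mul, hT.eq, hA.eq, Matrix.mul_assoc]
  have htrace : (S * A * S * A).trace = ((T * A * T)ᴴ * (T * A * T)).trace := by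
    rw [hC, ← hTT, show T * T * A * (T * T) * A = T * (T * A * T * (T * A)) by
      simp only [Matrix.mul_assoc], trace_mul_comm]
    simp only [Matrix.mul_assoc]
  exact htrace ▸ (posSemidef_conjTranspose_mul_self _).trace_nonneg

lemma re_trace_mul_sum_mul_mul_sum {Z : Type*} [Fintype Z]
    (S : Matrix n n ℂ) (c : Z → ℝ) (w : Z → Matrix n n ℂ) :
    (S * (∑ z, c z • w z) * S * ∑ z, c z • w z).trace.re
      = ∑ z, ∑ z', c z * c z' * (S * w z' * S * w z).trace.re := by
  simp only [Matrix.sum_mul, Matrix.mul_smul, Matrix.smul_mul, trace_sum,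
    trace_smul, Complex.re_sum, Complex.smul_re, smul_eq_mul, mul_sum]
  refine sum_congr rfl fun z _ => sum_congr rfl fun z' _ => by ring

end Matrix

namespace ZMod

lemma eq_zero_or_eq_one (a : ZMod 2) : a = 0 ∨ a = 1 := by
  revert a; decide

lemma neg_one_pow_val_mul_neg_one_pow_val {R : Type*} [Monoid R] [HasDistribNeg R] (a b : ZMod 2) :
    (-1 : R) ^ a.val * (-1) ^ b.val = if a = b then 1 else -1 := by
  rcases eq_zero_or_eq_one a with rfl | rfl <;>
    rcases eq_zero_or_eq_one b with rfl | rfl <;> simp [ZMod.val_one]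

variable {Z : Type*} [Fintype Z] (f : Z → ZMod 2)

lemma sum_filter_eq_sub_sum_filter_ne {R : Type*} [CommRing R] (a : ZMod 2) (g : Z → R) :
    ∑ z ∈ univ.filter (fun z => f z = a), g z - ∑ z ∈ univ.filter (fun z => f z ≠ a), g z
      = ∑ z, (-1) ^ a.val * (-1) ^ (f z).val * g z := by
  rw [sum_filter, sum_filter, ← sum_sub_distrib]
  refine sum_congr rfl fun z _ => ?_
  rw [neg_one_pow_val_mul_neg_one_pow_val]
  by_cases h : f z = a <;> simp [h, Ne.symm]

lemma sum_filter_zero_sub_sum_filter_one {R M : Type*} [Ring R] [AddCommGroup M] [Module R M]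
    (v : Z → M) :
    ∑ z ∈ univ.filter (fun z => f z = 0), v z - ∑ z ∈ univ.filter (fun z => f z = 1), v z
      = ∑ z, ((-1 : R) ^ (f z).val) • v z := by
  rw [sum_filter, sum_filter, ← sum_sub_distrib]
  refine sum_congr rfl fun z _ => ?_
  rcases eq_zero_or_eq_one (f z) with h | h <;> simp [h, ZMod.val_one]

end ZMod

lemma mul_re_trace_pgm_mul {Z : Type*} [Fintype Z] {D : ℕ} (p : Z → ℝ)
    (ρ : Z → Matrix (Fin D) (Fin D) ℂ) (h : (∑ z, (p z : ℂ) • ρ z).PosDef) (z z' : Z) :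
    p z * (pgm p ρ h z' * ρ z).trace.re
      = ((h.posSemidef.sqrt)⁻¹ * ((p z' : ℂ) • ρ z') * (h.posSemidef.sqrt)⁻¹ *
          ((p z : ℂ) • ρ z)).trace.re := by
  simp only [pgm, Matrix.smul_mul, Matrix.mul_smul, trace_smul, smul_eq_mul, Complex.re_ofReal_mul]

theorem stmt11_general {Z : Type*} [Fintype Z] (D : ℕ)
    (p : Z → ℝ)
    (ρ : Z → Matrix (Fin D) (Fin D) ℂ) (hρ : ∀ z, IsDensity (ρ z))
    (f : Z → ZMod 2)
    (hpos : (∑ z, (p z : ℂ) • ρ z).PosDef) :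
    (∑ z, p z * ∑ z' ∈ Finset.univ.filter (fun z' => f z' = f z),
        ((pgm p ρ hpos z' * ρ z).trace).re)
      - (∑ z, p z * ∑ z' ∈ Finset.univ.filter (fun z' => f z' ≠ f z),
        ((pgm p ρ hpos z' * ρ z).trace).re)
      = (((hpos.posSemidef.sqrt)⁻¹ *
            ((∑ z ∈ Finset.univ.filter (fun z => f z = 0), (p z : ℂ) • ρ z)
              - ∑ z ∈ Finset.univ.filter (fun z => f z = 1), (p z : ℂ) • ρ z) *
          (hpos.posSemidef.sqrt)⁻¹ *
            ((∑ z ∈ Finset.univ.filter (fun z => f z = 0), (p z : ℂ) • ρ z)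
              - ∑ z ∈ Finset.univ.filter (fun z => f z = 1), (p z : ℂ) • ρ z)).trace).re
    ∧ 0 ≤ (∑ z, p z * ∑ z' ∈ Finset.univ.filter (fun z' => f z' = f z),
            ((pgm p ρ hpos z' * ρ z).trace).re)
          - (∑ z, p z * ∑ z' ∈ Finset.univ.filter (fun z' => f z' ≠ f z),
            ((pgm p ρ hpos z' * ρ z).trace).re) := by
  set S := (hpos.posSemidef.sqrt)⁻¹
  set A := (∑ z ∈ univ.filter (fun z => f z = 0), (p z : ℂ) • ρ z)
    - ∑ z ∈ univ.filter (fun z => f z = 1), (p z : ℂ) • ρ z with hA_def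
  have hA_herm : A.IsHermitian := by
    have hw (s : Finset Z) : (∑ z ∈ s, (p z : ℂ) • ρ z).IsHermitian :=
      isSelfAdjoint_sum s fun z _ => (hρ z).1.1.smul (Complex.conj_ofReal _)
    exact (hw _).sub (hw _)
  have nonneg : 0 ≤ (S * A * S * A).trace.re := (Complex.nonneg_iff.1 <|
    hpos.posSemidef.posSemidef_sqrt.inv.trace_mul_mul_mul_nonneg hA_herm).1
  refine (and_iff_left_of_imp fun key => key ▸ nonneg).2 ?_
  rw [hA_def, ZMod.sum_filter_zero_sub_sum_filter_one (R := ℝ), re_trace_mul_sum_mul_mul_sum,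
    ← sum_sub_distrib]
  refine sum_congr rfl fun z _ => ?_
  rw [← mul_sub, ZMod.sum_filter_eq_sub_sum_filter_ne, mul_sum]
  refine sum_congr rfl fun z' _ => ?_
  rw [mul_left_comm, mul_re_trace_pgm_mul]

/-- for the measurement `M` that applies the PGM and outputs `f` of the result,
`Pr[M(ρ_Z) = f(Z)] − Pr[M(ρ_Z) ≠ f(Z)] = Tr(ρ^{-1/2}(ρ₀−ρ₁)ρ^{-1/2}(ρ₀−ρ₁))`, and in
particular this quantity is nonnegative. -/
theorem stmt11 {Z : Type*} [Fintype Z] [DecidableEq Z] (D : ℕ)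
    (p : Z → ℝ) (hp : ∀ z, 0 ≤ p z) (hsum : ∑ z, p z = 1)
    (ρ : Z → Matrix (Fin D) (Fin D) ℂ) (hρ : ∀ z, IsDensity (ρ z))
    (f : Z → ZMod 2)
    (hpos : (∑ z, (p z : ℂ) • ρ z).PosDef) :
    (∑ z, p z * ∑ z' ∈ Finset.univ.filter (fun z' => f z' = f z),
        ((pgm p ρ hpos z' * ρ z).trace).re)
      - (∑ z, p z * ∑ z' ∈ Finset.univ.filter (fun z' => f z' ≠ f z),
        ((pgm p ρ hpos z' * ρ z).trace).re)
      = (((hpos.posSemidef.sqrt)⁻¹ *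
            ((∑ z ∈ Finset.univ.filter (fun z => f z = 0), (p z : ℂ) • ρ z)
              - ∑ z ∈ Finset.univ.filter (fun z => f z = 1), (p z : ℂ) • ρ z) *
          (hpos.posSemidef.sqrt)⁻¹ *
            ((∑ z ∈ Finset.univ.filter (fun z => f z = 0), (p z : ℂ) • ρ z)
              - ∑ z ∈ Finset.univ.filter (fun z => f z = 1), (p z : ℂ) • ρ z)).trace).re
    ∧ 0 ≤ (∑ z, p z * ∑ z' ∈ Finset.univ.filter (fun z' => f z' = f z),
            ((pgm p ρ hpos z' * ρ z).trace).re)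
          - (∑ z, p z * ∑ z' ∈ Finset.univ.filter (fun z' => f z' ≠ f z),
            ((pgm p ρ hpos z' * ρ z).trace).re) :=
  stmt11_general D p ρ hρ f hpos
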